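/- arXiv:2410.16234 — 5 statements merged into one kernel-verified Lean document; each statement's English description precedes it below -/
import Mathlib

section
/- Let (r, Ω², φ, e) be a smooth solution of the spherically symmetric Einstein–Maxwell–scalar field system on an open set U ⊆ ℝ², and suppose ν := ∂_u r is nowhere zero on U. Then the renormalized Hawking mass ϖ satisfies the transport equations ∂_u ϖ = (1 − μ) · (r²/(2ν)) · (∂_u φ)² and ∂_v ϖ = (r²/(2κ)) · (∂_v φ)² on U, where μ := 2m/r and κ := −Ω²/(4ν). -/
noncomputable section

/-- Partial derivative in the ingoing null direction `u` (the first coordinate of `ℝ²`). -/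
def pu (f : ℝ × ℝ → ℝ) (p : ℝ × ℝ) : ℝ := fderiv ℝ f p (1, 0)

/-- Partial derivative in the outgoing null direction `v` (the second coordinate of `ℝ²`). -/
def pv (f : ℝ × ℝ → ℝ) (p : ℝ × ℝ) : ℝ := fderiv ℝ f p (0, 1)

/-- The Hawking mass `m = (r/2)(1 + 4νλ/Ω²)`, where `ν = ∂_u r` and `λ = ∂_v r`. -/
def hawkingMass (r Ω2 : ℝ × ℝ → ℝ) (p : ℝ × ℝ) : ℝ :=
  r p / 2 * (1 + 4 * pu r p * pv r p / Ω2 p)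

/-- The renormalized Hawking mass `ϖ = m + e²/(2r)`. -/
def varpi (r Ω2 : ℝ × ℝ → ℝ) (e : ℝ) (p : ℝ × ℝ) : ℝ :=
  hawkingMass r Ω2 p + e ^ 2 / (2 * r p)

/-- The mass aspect function `μ = 2m/r`. -/
def muQ (r Ω2 : ℝ × ℝ → ℝ) (p : ℝ × ℝ) : ℝ := 2 * hawkingMass r Ω2 p / r p

/-- `κ = -Ω²/(4ν)`. -/
def kap (r Ω2 : ℝ × ℝ → ℝ) (p : ℝ × ℝ) : ℝ := -Ω2 p / (4 * pu r p)

/-- `γ = -Ω²/(4λ)`. -/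
def gam (r Ω2 : ℝ × ℝ → ℝ) (p : ℝ × ℝ) : ℝ := -Ω2 p / (4 * pv r p)

/-- The redshift factor `𝜘 = r⁻²(ϖ - e²/r)`. -/
def redshift (r Ω2 : ℝ × ℝ → ℝ) (e : ℝ) (p : ℝ × ℝ) : ℝ :=
  (varpi r Ω2 e p - e ^ 2 / r p) / r p ^ 2

/-- A smooth solution of the spherically symmetric Einstein–Maxwell–scalar field
system on an open set `U ⊆ ℝ²`, with null coordinates `(u, v)`. -/
structure IsEMSSolution (U : Set (ℝ × ℝ)) (r Ω2 φ : ℝ × ℝ → ℝ) (e : ℝ) : Prop where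
  open_U : IsOpen U
  smooth_r : ContDiffOn ℝ (⊤ : ℕ∞) r U
  smooth_Ω2 : ContDiffOn ℝ (⊤ : ℕ∞) Ω2 U
  smooth_φ : ContDiffOn ℝ (⊤ : ℕ∞) φ U
  r_pos : ∀ p ∈ U, 0 < r p
  Ω2_pos : ∀ p ∈ U, 0 < Ω2 p
  wave_r : ∀ p ∈ U,
    pu (pv r) p
      = -Ω2 p / (4 * r p) - pu r p * pv r p / r p + Ω2 p * e ^ 2 / (4 * r p ^ 3)
  wave_Ω2 : ∀ p ∈ U,
    pu (pv (fun q => Real.log (Ω2 q))) p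
      = Ω2 p / (2 * r p ^ 2) + 2 * pu r p * pv r p / r p ^ 2
        - Ω2 p * e ^ 2 / r p ^ 4 - 2 * pu φ p * pv φ p
  raychaudhuri_u : ∀ p ∈ U,
    pu (fun q => pu r q / Ω2 q) p = -(r p / Ω2 p) * pu φ p ^ 2
  raychaudhuri_v : ∀ p ∈ U,
    pv (fun q => pv r q / Ω2 q) p = -(r p / Ω2 p) * pv φ p ^ 2
  wave_φ : ∀ p ∈ U,
    pu (pv φ) p = -(pv r p * pu φ p + pu r p * pv φ p) / r p


section helpers


variable {f g : ℝ × ℝ → ℝ} {p w : ℝ × ℝ}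

lemma pd_add (hf : DifferentiableAt ℝ f p) (hg : DifferentiableAt ℝ g p) :
    fderiv ℝ (fun q => f q + g q) p w = fderiv ℝ f p w + fderiv ℝ g p w := by
  rw [fderiv_fun_add hf hg]; rfl

lemma pd_mul (hf : DifferentiableAt ℝ f p) (hg : DifferentiableAt ℝ g p) :
    fderiv ℝ (fun q => f q * g q) p w
      = f p * fderiv ℝ g p w + g p * fderiv ℝ f p w := by
  rw [fderiv_fun_mul hf hg]; simp

lemma pd_const_mul (hf : DifferentiableAt ℝ f p) (c : ℝ) :
    fderiv ℝ (fun q => c * f q) p w = c * fderiv ℝ f p w := by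
  rw [fderiv_const_mul hf]; simp

lemma pd_inv (hf : DifferentiableAt ℝ f p) (hne : f p ≠ 0) :
    fderiv ℝ (fun q => (f q)⁻¹) p w = -(fderiv ℝ f p w) / f p ^ 2 := by
  have h := (hasDerivAt_inv hne).comp_hasFDerivAt p hf.hasFDerivAt
  rw [show (fun q => (f q)⁻¹) = (fun y : ℝ => y⁻¹) ∘ f from rfl, h.fderiv]
  simp; ring

lemma pd_shape {r a G : ℝ × ℝ → ℝ} {p w : ℝ × ℝ} (c : ℝ)
    (hr : DifferentiableAt ℝ r p) (ha : DifferentiableAt ℝ a p)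
    (hG : DifferentiableAt ℝ G p) (hrne : r p ≠ 0) :
    fderiv ℝ (fun q => r q / 2 + 2 * (r q * (a q * G q)) + c * (r q)⁻¹) p w
      = fderiv ℝ r p w / 2
        + 2 * (fderiv ℝ r p w * (a p * G p)
            + r p * (fderiv ℝ a p w * G p + a p * fderiv ℝ G p w))
        - c * fderiv ℝ r p w / r p ^ 2 := by
  have h1 : DifferentiableAt ℝ (fun q => r q / 2) p := by fun_prop
  have h2 : DifferentiableAt ℝ (fun q => 2 * (r q * (a q * G q))) p :=
    (hr.mul (ha.mul hG)).const_mul 2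
  have h3 : DifferentiableAt ℝ (fun q => c * (r q)⁻¹) p := (hr.inv hrne).const_mul c
  rw [pd_add (f := fun q => r q / 2 + 2 * (r q * (a q * G q))) (h1.add h2) h3, pd_add h1 h2, pd_const_mul (f := fun q => (r q)⁻¹) (hr.inv hrne) c, pd_inv hr hrne,
      pd_const_mul (f := fun q => r q * (a q * G q)) (hr.mul (ha.mul hG)) 2,
      pd_mul (g := fun q => a q * G q) hr (ha.mul hG), pd_mul ha hG]
  have h4 : fderiv ℝ (fun q => r q / 2) p w = fderiv ℝ r p w / 2 := by
    simp only [div_eq_mul_inv]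
    rw [fderiv_mul_const hr]; simp; ring
  rw [h4]; ring

lemma pd_of_contDiffAt (hf : ContDiffAt ℝ (⊤ : ℕ∞) f p) (v : ℝ × ℝ) :
    ContDiffAt ℝ (⊤ : ℕ∞) (fun q => fderiv ℝ f q v) p := by
  have h1 : ContDiffAt ℝ (⊤ : ℕ∞) (fderiv ℝ f) p := hf.fderiv_right (by simp)
  exact (ContinuousLinearMap.apply ℝ ℝ v).contDiff.comp_contDiffAt p h1

lemma pd_symm (hf : ContDiffAt ℝ (⊤ : ℕ∞) f p) : pv (pu f) p = pu (pv f) p := by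
  have hS := hf.isSymmSndFDerivAt (by rw [minSmoothness_of_isRCLikeNormedField]; exact WithTop.coe_le_coe.mpr le_top)
  have hdc : DifferentiableAt ℝ (fderiv ℝ f) p :=
    (hf.fderiv_right (m := (⊤ : ℕ∞)) (by simp)).differentiableAt (by simp)
  unfold pu pv
  rw [fderiv_clm_apply hdc (differentiableAt_const _),
      fderiv_clm_apply hdc (differentiableAt_const _)]
  simpa using hS (0, 1) (1, 0)

end helpers

/-- For a smooth solution of the spherically symmetric
Einstein–Maxwell–scalar field system on an open set `U ⊆ ℝ²` with `ν = ∂_u r`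
nowhere zero, the renormalized Hawking mass satisfies the transport equations
`∂_u ϖ = (1 - μ)(r²/(2ν))(∂_u φ)²` and `∂_v ϖ = (r²/(2κ))(∂_v φ)²`. -/
theorem varpi_transport_equations
    (U : Set (ℝ × ℝ)) (r Ω2 φ : ℝ × ℝ → ℝ) (e : ℝ)
    (hsol : IsEMSSolution U r Ω2 φ e)
    (hν : ∀ p ∈ U, pu r p ≠ 0) :
    ∀ p ∈ U,
      pu (varpi r Ω2 e) p
        = (1 - muQ r Ω2 p) * (r p ^ 2 / (2 * pu r p)) * pu φ p ^ 2 ∧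
      pv (varpi r Ω2 e) p = r p ^ 2 / (2 * kap r Ω2 p) * pv φ p ^ 2 := by
  intro p hp
  have hU := hsol.open_U
  have hrC : ContDiffAt ℝ (⊤ : ℕ∞) r p := hsol.smooth_r.contDiffAt (hU.mem_nhds hp)
  have hΩC : ContDiffAt ℝ (⊤ : ℕ∞) Ω2 p := hsol.smooth_Ω2.contDiffAt (hU.mem_nhds hp)
  have hrd : DifferentiableAt ℝ r p := hrC.differentiableAt (by simp)
  have hΩd : DifferentiableAt ℝ Ω2 p := hΩC.differentiableAt (by simp)
  have hrne : r p ≠ 0 := (hsol.r_pos p hp).ne'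
  have hΩne : Ω2 p ≠ 0 := (hsol.Ω2_pos p hp).ne'
  have hνne : pu r p ≠ 0 := hν p hp
  have hpurd : DifferentiableAt ℝ (pu r) p :=
    (pd_of_contDiffAt hrC (1, 0)).differentiableAt (by simp)
  have hpvrd : DifferentiableAt ℝ (pv r) p :=
    (pd_of_contDiffAt hrC (0, 1)).differentiableAt (by simp)
  have hGd : DifferentiableAt ℝ (fun q => pu r q / Ω2 q) p := by
    have h : DifferentiableAt ℝ (fun q => pu r q * (Ω2 q)⁻¹) p := hpurd.mul (hΩd.inv hΩne)
    simpa [div_eq_mul_inv] using h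
  have hHd : DifferentiableAt ℝ (fun q => pv r q / Ω2 q) p := by
    have h : DifferentiableAt ℝ (fun q => pv r q * (Ω2 q)⁻¹) p := hpvrd.mul (hΩd.inv hΩne)
    simpa [div_eq_mul_inv] using h
  have hϖu : varpi r Ω2 e = fun q =>
      r q / 2 + 2 * (r q * (pv r q * (pu r q / Ω2 q))) + e ^ 2 / 2 * (r q)⁻¹ := by
    funext q; unfold varpi hawkingMass; ring
  have hϖv : varpi r Ω2 e = fun q =>
      r q / 2 + 2 * (r q * (pu r q * (pv r q / Ω2 q))) + e ^ 2 / 2 * (r q)⁻¹ := by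
    funext q; unfold varpi hawkingMass; ring
  have E2 : fderiv ℝ (pv r) p (1, 0)
      = -Ω2 p / (4 * r p) - pu r p * pv r p / r p + Ω2 p * e ^ 2 / (4 * r p ^ 3) :=
    hsol.wave_r p hp
  have E1 : fderiv ℝ (fun q => pu r q / Ω2 q) p (1, 0) = -(r p / Ω2 p) * pu φ p ^ 2 :=
    hsol.raychaudhuri_u p hp
  have E1' : fderiv ℝ (fun q => pv r q / Ω2 q) p (0, 1) = -(r p / Ω2 p) * pv φ p ^ 2 :=
    hsol.raychaudhuri_v p hp
  have E3 : fderiv ℝ r p (1, 0) = pu r p := rfl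
  have E4 : fderiv ℝ r p (0, 1) = pv r p := rfl
  have E5 : fderiv ℝ (pu r) p (0, 1)
      = -Ω2 p / (4 * r p) - pu r p * pv r p / r p + Ω2 p * e ^ 2 / (4 * r p ^ 3) := by
    have := pd_symm hrC
    unfold pv at this
    rw [this]; exact hsol.wave_r p hp
  constructor
  · have key := pd_shape (r := r) (a := pv r) (G := fun q => pu r q / Ω2 q)
      (p := p) (w := (1, 0)) (e ^ 2 / 2) hrd hpvrd hGd hrne
    rw [show pu (varpi r Ω2 e) p
        = fderiv ℝ (fun q =>
            r q / 2 + 2 * (r q * (pv r q * (pu r q / Ω2 q))) + e ^ 2 / 2 * (r q)⁻¹) p (1, 0) from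
      by rw [← hϖu]; rfl, key, E1, E2, E3]
    simp only [muQ, hawkingMass]
    field_simp
    ring
  · have key := pd_shape (r := r) (a := pu r) (G := fun q => pv r q / Ω2 q)
      (p := p) (w := (0, 1)) (e ^ 2 / 2) hrd hpurd hHd hrne
    rw [show pv (varpi r Ω2 e) p
        = fderiv ℝ (fun q =>
            r q / 2 + 2 * (r q * (pu r q * (pv r q / Ω2 q))) + e ^ 2 / 2 * (r q)⁻¹) p (0, 1) from
      by rw [← hϖv]; rfl, key, E1', E4, E5]
    simp only [kap]
    field_simp
    ring
end
end

section
/- Let U ⊆ ℝ² be open, and let r, φ : U → ℝ be smooth with r > 0, where φ satisfies the scalar wave equation ∂_u∂_v φ = −((∂_v r)(∂_u φ) + (∂_u r)(∂_v φ))/r on U. Then for every pair of C¹ functions Xᵘ, Xᵛ : U → ℝ the multiplier identity ∂_v(r² (∂_u φ)² Xᵘ) + ∂_u(r² (∂_v φ)² Xᵛ) = r² (∂_v Xᵘ)(∂_u φ)² + r² (∂_u Xᵛ)(∂_v φ)² − 2r((∂_u r) Xᵘ + (∂_v r) Xᵛ)(∂_u φ)(∂_v φ) holds on U. -/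
noncomputable section

lemma pv_mul {a b : ℝ × ℝ → ℝ} {p : ℝ × ℝ}
    (ha : DifferentiableAt ℝ a p) (hb : DifferentiableAt ℝ b p) :
    pv (fun q => a q * b q) p = a p * pv b p + b p * pv a p := by
  simp [pv, fderiv_fun_mul ha hb]

lemma pu_mul {a b : ℝ × ℝ → ℝ} {p : ℝ × ℝ}
    (ha : DifferentiableAt ℝ a p) (hb : DifferentiableAt ℝ b p) :
    pu (fun q => a q * b q) p = a p * pu b p + b p * pu a p := by
  simp [pu, fderiv_fun_mul ha hb]

lemma pv_sq {a : ℝ × ℝ → ℝ} {p : ℝ × ℝ} (ha : DifferentiableAt ℝ a p) :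
    pv (fun q => a q ^ 2) p = 2 * a p * pv a p := by
  have h : (fun q => a q ^ 2) = fun q => a q * a q := by funext q; ring
  rw [h, pv_mul ha ha]; ring

lemma pu_sq {a : ℝ × ℝ → ℝ} {p : ℝ × ℝ} (ha : DifferentiableAt ℝ a p) :
    pu (fun q => a q ^ 2) p = 2 * a p * pu a p := by
  have h : (fun q => a q ^ 2) = fun q => a q * a q := by funext q; ring
  rw [h, pu_mul ha ha]; ring

lemma fderiv_fderiv_apply {f : ℝ × ℝ → ℝ} {p : ℝ × ℝ}
    (hf : DifferentiableAt ℝ (fderiv ℝ f) p) (w z : ℝ × ℝ) :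
    fderiv ℝ (fun q => fderiv ℝ f q w) p z = fderiv ℝ (fderiv ℝ f) p z w := by
  have := fderiv_clm_apply hf (differentiableAt_const w)
  rw [this]
  simp

/-- Clairaut symmetry for `C²` functions. -/
lemma pv_pu_symm {f : ℝ × ℝ → ℝ} {p : ℝ × ℝ} (hf : ContDiffAt ℝ 2 f p) :
    pv (pu f) p = pu (pv f) p := by
  have hdf : DifferentiableAt ℝ (fderiv ℝ f) p :=
    (hf.fderiv_right (m := 1) le_rfl).differentiableAt one_ne_zero
  have hsymm : IsSymmSndFDerivAt ℝ f p := hf.isSymmSndFDerivAt (by simp)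
  show fderiv ℝ (fun q => fderiv ℝ f q (1, 0)) p (0, 1)
      = fderiv ℝ (fun q => fderiv ℝ f q (0, 1)) p (1, 0)
  rw [fderiv_fderiv_apply hdf, fderiv_fderiv_apply hdf, hsymm]

/-- If `r, φ` are smooth on an open `U ⊆ ℝ²` with `r > 0` and
`φ` satisfies the scalar wave equation on the spherically symmetric background,
then for all `C¹` component functions `Xu, Xv` the multiplier identity
`∂_v(r²(∂_u φ)² Xᵘ) + ∂_u(r²(∂_v φ)² Xᵛ)
  = r²(∂_v Xᵘ)(∂_u φ)² + r²(∂_u Xᵛ)(∂_v φ)²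
    - 2r((∂_u r)Xᵘ + (∂_v r)Xᵛ)(∂_u φ)(∂_v φ)` holds on `U`. -/
theorem multiplier_identity
    (U : Set (ℝ × ℝ)) (hU : IsOpen U) (r φ : ℝ × ℝ → ℝ)
    (hr : ContDiffOn ℝ (⊤ : ℕ∞) r U) (hφ : ContDiffOn ℝ (⊤ : ℕ∞) φ U)
    (hrpos : ∀ p ∈ U, 0 < r p)
    (hwave : ∀ p ∈ U,
      pu (pv φ) p = -(pv r p * pu φ p + pu r p * pv φ p) / r p) :
    ∀ Xu Xv : ℝ × ℝ → ℝ, ContDiffOn ℝ 1 Xu U → ContDiffOn ℝ 1 Xv U →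
      ∀ p ∈ U,
        pv (fun q => r q ^ 2 * pu φ q ^ 2 * Xu q) p
          + pu (fun q => r q ^ 2 * pv φ q ^ 2 * Xv q) p
        = r p ^ 2 * pv Xu p * pu φ p ^ 2 + r p ^ 2 * pu Xv p * pv φ p ^ 2
          - 2 * r p * (pu r p * Xu p + pv r p * Xv p) * pu φ p * pv φ p := by
  intro Xu Xv hXu hXv p hp
  have hmem : U ∈ nhds p := hU.mem_nhds hp
  have hφ2 : ContDiffAt ℝ 2 φ p := (hφ.contDiffAt hmem).of_le (by exact WithTop.coe_le_coe.mpr le_top)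
  have hr2 : ContDiffAt ℝ 2 r p := (hr.contDiffAt hmem).of_le (by exact WithTop.coe_le_coe.mpr le_top)
  have hdr : DifferentiableAt ℝ r p := hr2.differentiableAt two_ne_zero
  have hdXu : DifferentiableAt ℝ Xu p := (hXu.contDiffAt hmem).differentiableAt one_ne_zero
  have hdXv : DifferentiableAt ℝ Xv p := (hXv.contDiffAt hmem).differentiableAt one_ne_zero
  have hdfφ : DifferentiableAt ℝ (fderiv ℝ φ) p :=
    (hφ2.fderiv_right (m := 1) le_rfl).differentiableAt one_ne_zero
  have hdpuφ : DifferentiableAt ℝ (pu φ) p := by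
    exact ((ContinuousLinearMap.apply ℝ ℝ ((1 : ℝ), (0 : ℝ))).differentiable.differentiableAt).comp
      p hdfφ
  have hdpvφ : DifferentiableAt ℝ (pv φ) p := by
    exact ((ContinuousLinearMap.apply ℝ ℝ ((0 : ℝ), (1 : ℝ))).differentiable.differentiableAt).comp
      p hdfφ
  have hrne : r p ≠ 0 := (hrpos p hp).ne'
  have hwv : pu (pv φ) p = -(pv r p * pu φ p + pu r p * pv φ p) / r p := hwave p hp
  have hsym : pv (pu φ) p = pu (pv φ) p := pv_pu_symm hφ2
  -- differentiability of building blocks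
  have h1 : DifferentiableAt ℝ (fun q => r q ^ 2) p := hdr.pow 2
  have h2 : DifferentiableAt ℝ (fun q => pu φ q ^ 2) p := hdpuφ.pow 2
  have h3 : DifferentiableAt ℝ (fun q => pv φ q ^ 2) p := hdpvφ.pow 2
  have h12 : DifferentiableAt ℝ (fun q => r q ^ 2 * pu φ q ^ 2) p := h1.mul h2
  have h13 : DifferentiableAt ℝ (fun q => r q ^ 2 * pv φ q ^ 2) p := h1.mul h3
  have e1 : pv (fun q => r q ^ 2 * pu φ q ^ 2 * Xu q) p
      = (r p ^ 2 * pu φ p ^ 2) * pv Xu p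
        + Xu p * (r p ^ 2 * (2 * pu φ p * pv (pu φ) p)
          + pu φ p ^ 2 * (2 * r p * pv r p)) := by
    rw [pv_mul h12 hdXu, pv_mul h1 h2, pv_sq hdpuφ, pv_sq hdr]
  have e2 : pu (fun q => r q ^ 2 * pv φ q ^ 2 * Xv q) p
      = (r p ^ 2 * pv φ p ^ 2) * pu Xv p
        + Xv p * (r p ^ 2 * (2 * pv φ p * pu (pv φ) p)
          + pv φ p ^ 2 * (2 * r p * pu r p)) := by
    rw [pu_mul h13 hdXv, pu_mul h1 h3, pu_sq hdpvφ, pu_sq hdr]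
  rw [e1, e2, hsym, hwv]
  field_simp
  ring
end
end

section
/- Let M ∈ ℝ, α ∈ ℝ, u₁ < u₂, and let r̄, f : [u₁,u₂] → ℝ be C¹ functions with r̄(u) > M and ν̄(u) := r̄'(u) < 0 for all u ∈ [u₁,u₂]. Then the Hardy-type identity ((α+1)²/4) ∫_{u₁}^{u₂} (r̄−M)^α f² (−ν̄) du + ∫_{u₁}^{u₂} ((r̄−M)^α/(−ν̄)) ((r̄−M) f' − ((α+1)/2)(−ν̄) f)² du = ∫_{u₁}^{u₂} ((r̄−M)^{α+2}/(−ν̄)) (f')² du + ((α+1)/2) ((r̄−M)^{α+1} f²)(u₁) − ((α+1)/2) ((r̄−M)^{α+1} f²)(u₂) holds. -/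
open MeasureTheory intervalIntegral Set

/-! Completing the square, the two integrands on the left differ pointwise from the first
integrand on the right by `-((α + 1) / 2)` times the derivative of `(r̄ - M) ^ (α + 1) * f ^ 2`;
the boundary terms are then the fundamental theorem of calculus. -/

theorem integral_eq_sub_of_hasDerivWithinAt_Icc {g g' : ℝ → ℝ} {a b : ℝ} (hab : a ≤ b)
    (hg : ∀ x ∈ Icc a b, HasDerivWithinAt g (g' x) (Icc a b) x)
    (hint : IntervalIntegrable g' volume a b) :
    ∫ x in a..b, g' x = g b - g a :=
  integral_eq_sub_of_hasDerivAt_of_le hab (fun x hx => (hg x hx).continuousWithinAt)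
    (fun x hx => (hg x (Ioo_subset_Icc_self hx)).hasDerivAt (Icc_mem_nhds hx.1 hx.2)) hint

theorem HasDerivWithinAt.rpow_add_one_mul_sq {r f : ℝ → ℝ} {r' f' p x : ℝ} {s : Set ℝ}
    (hr : HasDerivWithinAt r r' s x) (hf : HasDerivWithinAt f f' s x) (hx : r x ≠ 0) :
    HasDerivWithinAt (fun y => r y ^ (p + 1) * f y ^ 2)
      ((p + 1) * r x ^ p * r' * f x ^ 2 + r x ^ (p + 1) * (2 * f x * f')) s x := by
  have hpow := hr.rpow_const (p := p + 1) (Or.inl hx)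
  rw [add_sub_cancel_right] at hpow
  exact (hpow.fun_mul (hf.fun_pow 2)).congr_deriv (by push_cast; ring)

theorem hardy_integrand_identity {R ν x x' α : ℝ} (hR : 0 < R) (hν : ν ≠ 0) :
    (α + 1) ^ 2 / 4 * (R ^ α * x ^ 2 * (-ν))
        + R ^ α / (-ν) * (R * x' - (α + 1) / 2 * (-ν) * x) ^ 2
      = R ^ (α + 2) / (-ν) * x' ^ 2
        - (α + 1) / 2 * ((α + 1) * R ^ α * ν * x ^ 2 + R ^ (α + 1) * (2 * x * x')) := by
  rw [Real.rpow_add hR, Real.rpow_add hR, Real.rpow_one, Real.rpow_two]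
  field_simp
  ring

/-- The Hardy-type identity along ingoing null segments: for
`C¹` functions `r̄, f` on `[u₁, u₂]` with `r̄ > M` and `ν̄ = r̄' < 0`,
`((α+1)²/4) ∫ (r̄-M)^α f² (-ν̄) du
   + ∫ ((r̄-M)^α/(-ν̄)) ((r̄-M) f' - ((α+1)/2)(-ν̄) f)² du
 = ∫ ((r̄-M)^(α+2)/(-ν̄)) (f')² du
   + ((α+1)/2)((r̄-M)^(α+1) f²)(u₁) - ((α+1)/2)((r̄-M)^(α+1) f²)(u₂)`. -/
theorem hardy_identity_horizon
    (M α u₁ u₂ : ℝ) (h12 : u₁ < u₂) (rb rb' f f' : ℝ → ℝ)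
    (hrb : ∀ u ∈ Set.Icc u₁ u₂, HasDerivWithinAt rb (rb' u) (Set.Icc u₁ u₂) u)
    (hf : ∀ u ∈ Set.Icc u₁ u₂, HasDerivWithinAt f (f' u) (Set.Icc u₁ u₂) u)
    (hrb' : ContinuousOn rb' (Set.Icc u₁ u₂))
    (hf' : ContinuousOn f' (Set.Icc u₁ u₂))
    (hgt : ∀ u ∈ Set.Icc u₁ u₂, M < rb u)
    (hneg : ∀ u ∈ Set.Icc u₁ u₂, rb' u < 0) :
    (α + 1) ^ 2 / 4 * (∫ u in u₁..u₂, (rb u - M) ^ α * f u ^ 2 * (-rb' u))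
      + (∫ u in u₁..u₂,
          (rb u - M) ^ α / (-rb' u)
            * ((rb u - M) * f' u - (α + 1) / 2 * (-rb' u) * f u) ^ 2)
    = (∫ u in u₁..u₂, (rb u - M) ^ (α + 2) / (-rb' u) * f' u ^ 2)
      + (α + 1) / 2 * ((rb u₁ - M) ^ (α + 1) * f u₁ ^ 2)
      - (α + 1) / 2 * ((rb u₂ - M) ^ (α + 1) * f u₂ ^ 2) := by
  have hR : ∀ u ∈ Icc u₁ u₂, 0 < rb u - M := fun u hu => sub_pos.mpr (hgt u hu)
  have hν : ∀ u ∈ Icc u₁ u₂, -rb' u ≠ 0 := fun u hu => neg_ne_zero.mpr (hneg u hu).ne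
  have hrbc : ContinuousOn rb (Icc u₁ u₂) := fun u hu => (hrb u hu).continuousWithinAt
  have hfc : ContinuousOn f (Icc u₁ u₂) := fun u hu => (hf u hu).continuousWithinAt
  have hweight : ∀ p : ℝ, ContinuousOn (fun u => (rb u - M) ^ p) (Icc u₁ u₂) := fun p =>
    (hrbc.sub continuousOn_const).rpow_const fun u hu => Or.inl (hR u hu).ne'
  set g' : ℝ → ℝ := fun u =>
    (α + 1) * (rb u - M) ^ α * rb' u * f u ^ 2 + (rb u - M) ^ (α + 1) * (2 * f u * f' u)
  have hint₁ : IntervalIntegrable (fun u => (rb u - M) ^ α * f u ^ 2 * (-rb' u)) volume u₁ u₂ :=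
    ContinuousOn.intervalIntegrable_of_Icc h12.le (by fun_prop)
  have hint₂ : IntervalIntegrable (fun u => (rb u - M) ^ α / (-rb' u)
      * ((rb u - M) * f' u - (α + 1) / 2 * (-rb' u) * f u) ^ 2) volume u₁ u₂ :=
    ContinuousOn.intervalIntegrable_of_Icc h12.le (by fun_prop (disch := assumption))
  have hint₃ : IntervalIntegrable (fun u => (rb u - M) ^ (α + 2) / (-rb' u) * f' u ^ 2)
      volume u₁ u₂ :=
    ContinuousOn.intervalIntegrable_of_Icc h12.le (by fun_prop (disch := assumption))
  have hint₄ : IntervalIntegrable g' volume u₁ u₂ :=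
    ContinuousOn.intervalIntegrable_of_Icc h12.le (by fun_prop)
  have hFTC := integral_eq_sub_of_hasDerivWithinAt_Icc h12.le
    (fun u hu => ((hrb u hu).sub_const M).rpow_add_one_mul_sq (p := α) (hf u hu) (hR u hu).ne')
    hint₄
  rw [← intervalIntegral.integral_const_mul, ← integral_add (hint₁.const_mul _) hint₂,
    integral_congr (g := fun u => (rb u - M) ^ (α + 2) / (-rb' u) * f' u ^ 2 - (α + 1) / 2 * g' u),
    integral_sub hint₃ (hint₄.const_mul _), intervalIntegral.integral_const_mul, hFTC]
  · ring
  · intro u hu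
    rw [uIcc_of_le h12.le] at hu
    exact hardy_integrand_identity (hR u hu) (hneg u hu).ne
end

section
/- Let α ∈ ℝ, v₁ < v₂, and let r, f : [v₁,v₂] → ℝ be C¹ functions with r(v) > 0 and λ(v) := r'(v) > 0 for all v ∈ [v₁,v₂]. Then the Hardy-type identity ((α+1)²/4) ∫_{v₁}^{v₂} r^α f² λ dv + ∫_{v₁}^{v₂} (r^α/λ) (r f' + ((α+1)/2) λ f)² dv = ∫_{v₁}^{v₂} (r^{α+2}/λ) (f')² dv + ((α+1)/2) (r^{α+1} f²)(v₂) − ((α+1)/2) (r^{α+1} f²)(v₁) holds. -/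
open MeasureTheory intervalIntegral Set

/-!
With `c = (α + 1) / 2`, expanding the square gives the pointwise identity (`λ = r'`)
`c² r^α f² λ + (r^α/λ) (r f' + c λ f)² = (r^(α+2)/λ) f'² + c (r^(α+1) f²)'`,
and the theorem is its integral over `[v₁, v₂]`, the last term by the fundamental theorem
of calculus.
-/

theorem integral_eq_sub_of_hasDerivWithinAt_Icc_s12 {E : Type*} [NormedAddCommGroup E]
    [NormedSpace ℝ E] [CompleteSpace E] {F F' : ℝ → E} {a b : ℝ} (hab : a ≤ b)
    (hF : ∀ x ∈ Icc a b, HasDerivWithinAt F (F' x) (Icc a b) x)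
    (hF' : IntervalIntegrable F' volume a b) :
    ∫ x in a..b, F' x = F b - F a :=
  integral_eq_sub_of_hasDerivAt_of_le hab (fun x hx => (hF x hx).continuousWithinAt)
    (fun x hx => (hF x (Ioo_subset_Icc_self hx)).hasDerivAt (Icc_mem_nhds hx.1 hx.2)) hF'

theorem HasDerivWithinAt.rpow_const_mul_sq {r f : ℝ → ℝ} {r' f' x p : ℝ} {s : Set ℝ}
    (hr : HasDerivWithinAt r r' s x) (hf : HasDerivWithinAt f f' s x) (hx : r x ≠ 0) :
    HasDerivWithinAt (fun v => r v ^ p * f v ^ 2)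
      (p * r x ^ (p - 1) * r' * f x ^ 2 + r x ^ p * (2 * f x * f')) s x :=
  ((hr.rpow_const (Or.inl hx)).mul (hf.fun_pow 2)).congr_deriv
    (by simp only [Nat.cast_ofNat, Nat.reduceSub, pow_one]; ring)

theorem hardy_integrand_eq (α : ℝ) {r r' : ℝ} (f f' : ℝ) (hr : 0 < r) (hr' : r' ≠ 0) :
    ((α + 1) / 2) ^ 2 * (r ^ α * f ^ 2 * r') + r ^ α / r' * (r * f' + (α + 1) / 2 * r' * f) ^ 2
      = r ^ (α + 2) / r' * f' ^ 2
        + (α + 1) / 2 * ((α + 1) * r ^ α * r' * f ^ 2 + r ^ (α + 1) * (2 * f * f')) := by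
  have h1 : r ^ (α + 1) = r ^ α * r := by rw [Real.rpow_add hr, Real.rpow_one]
  have h2 : r ^ (α + 2) = r ^ α * r ^ 2 := by rw [Real.rpow_add hr, Real.rpow_two]
  rw [h1, h2]
  field_simp
  ring

/-- The Hardy-type identity along outgoing null segments: for
`C¹` functions `r, f` on `[v₁, v₂]` with `r > 0` and `λ = r' > 0`,
`((α+1)²/4) ∫ r^α f² λ dv + ∫ (r^α/λ) (r f' + ((α+1)/2) λ f)² dv
 = ∫ (r^(α+2)/λ) (f')² dv + ((α+1)/2)(r^(α+1) f²)(v₂) - ((α+1)/2)(r^(α+1) f²)(v₁)`. -/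
theorem hardy_identity_infinity
    (α v₁ v₂ : ℝ) (h12 : v₁ < v₂) (r r' f f' : ℝ → ℝ)
    (hr : ∀ v ∈ Set.Icc v₁ v₂, HasDerivWithinAt r (r' v) (Set.Icc v₁ v₂) v)
    (hf : ∀ v ∈ Set.Icc v₁ v₂, HasDerivWithinAt f (f' v) (Set.Icc v₁ v₂) v)
    (hr' : ContinuousOn r' (Set.Icc v₁ v₂))
    (hf' : ContinuousOn f' (Set.Icc v₁ v₂))
    (hpos : ∀ v ∈ Set.Icc v₁ v₂, 0 < r v)
    (hlam : ∀ v ∈ Set.Icc v₁ v₂, 0 < r' v) :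
    (α + 1) ^ 2 / 4 * (∫ v in v₁..v₂, r v ^ α * f v ^ 2 * r' v)
      + (∫ v in v₁..v₂,
          r v ^ α / r' v * (r v * f' v + (α + 1) / 2 * r' v * f v) ^ 2)
    = (∫ v in v₁..v₂, r v ^ (α + 2) / r' v * f' v ^ 2)
      + (α + 1) / 2 * (r v₂ ^ (α + 1) * f v₂ ^ 2)
      - (α + 1) / 2 * (r v₁ ^ (α + 1) * f v₁ ^ 2) := by
  have hIcc : uIcc v₁ v₂ = Icc v₁ v₂ := uIcc_of_le h12.le
  have hr0 : ∀ v ∈ Icc v₁ v₂, r v ≠ 0 := fun v hv => (hpos v hv).ne'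
  have hr'0 : ∀ v ∈ Icc v₁ v₂, r' v ≠ 0 := fun v hv => (hlam v hv).ne'
  have hrc : ContinuousOn r (Icc v₁ v₂) := fun v hv => (hr v hv).continuousWithinAt
  have hfc : ContinuousOn f (Icc v₁ v₂) := fun v hv => (hf v hv).continuousWithinAt
  have hrpow (β : ℝ) : ContinuousOn (fun v => r v ^ β) (Icc v₁ v₂) :=
    hrc.rpow_const fun v hv => Or.inl (hr0 v hv)
  have hweight : ∀ v ∈ Icc v₁ v₂, HasDerivWithinAt (fun v => r v ^ (α + 1) * f v ^ 2)
      ((α + 1) * r v ^ α * r' v * f v ^ 2 + r v ^ (α + 1) * (2 * f v * f' v)) (Icc v₁ v₂) v :=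
    fun v hv => by
      simpa only [add_sub_cancel_right] using
        (hr v hv).rpow_const_mul_sq (p := α + 1) (hf v hv) (hr0 v hv)
  have hidentity := integral_congr (μ := volume) fun v hv =>
    hardy_integrand_eq α (f v) (f' v) (hpos v (hIcc ▸ hv)) (hr'0 v (hIcc ▸ hv))
  rw [intervalIntegral.integral_add, intervalIntegral.integral_add,
    intervalIntegral.integral_const_mul, intervalIntegral.integral_const_mul,
    integral_eq_sub_of_hasDerivWithinAt_Icc_s12 h12.le hweight] at hidentity
  · rw [show (α + 1) ^ 2 / 4 = ((α + 1) / 2) ^ 2 by ring]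
    linarith
  -- `fun_prop` takes the continuity of `r`, `f`, `r ^ β`, `r'`, `f'` from the context.
  all_goals exact ContinuousOn.intervalIntegrable_of_Icc h12.le (by fun_prop (disch := exact hr'0))
end

section
/- Let 0 < c₂ < c₁ and let x₁⁻ < x₁⁺ be real numbers. Let f₁ : [x₁⁻, x₁⁺] → [−c₁, c₁] be a continuous surjective function satisfying f₁(x₁⁻) = −c₁ and f₁(x₁⁺) = c₁. Let f₂ : [x₁⁻, x₁⁺] → ℝ be a continuous function satisfying sup_{[x₁⁻,x₁⁺]} |f₂ − f₁| < c₁ − c₂. Then there exist real numbers x₂⁻ < x₂⁺ with [x₂⁻, x₂⁺] ⊂ (x₁⁻, x₁⁺) such that f₂ restricted to [x₂⁻, x₂⁺] maps onto [−c₂, c₂] surjectively, with f₂(x₂⁻) = −c₂ and f₂(x₂⁺) = c₂. -/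
/-- (Inductive modulation lemma.) Let `0 < c₂ < c₁` and
`x₁⁻ < x₁⁺`. If `f₁ : [x₁⁻, x₁⁺] → [-c₁, c₁]` is continuous and surjective with
`f₁(x₁⁻) = -c₁`, `f₁(x₁⁺) = c₁`, and `f₂` is continuous on `[x₁⁻, x₁⁺]` with
`sup |f₂ - f₁| < c₁ - c₂`, then there is a subinterval
`[x₂⁻, x₂⁺] ⊂ (x₁⁻, x₁⁺)` on which `f₂` maps onto `[-c₂, c₂]` surjectively,
with `f₂(x₂⁻) = -c₂` and `f₂(x₂⁺) = c₂`. -/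
theorem inductive_modulation
    (c₁ c₂ x₁m x₁p : ℝ) (hc₂ : 0 < c₂) (hcc : c₂ < c₁) (hx : x₁m < x₁p)
    (f₁ f₂ : ℝ → ℝ)
    (hf₁cont : ContinuousOn f₁ (Set.Icc x₁m x₁p))
    (hf₁maps : Set.MapsTo f₁ (Set.Icc x₁m x₁p) (Set.Icc (-c₁) c₁))
    (hf₁surj : Set.SurjOn f₁ (Set.Icc x₁m x₁p) (Set.Icc (-c₁) c₁))
    (hf₁m : f₁ x₁m = -c₁) (hf₁p : f₁ x₁p = c₁)
    (hf₂cont : ContinuousOn f₂ (Set.Icc x₁m x₁p))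
    (hdiff : ∀ x ∈ Set.Icc x₁m x₁p, |f₂ x - f₁ x| < c₁ - c₂) :
    ∃ x₂m x₂p : ℝ, x₂m < x₂p ∧ Set.Icc x₂m x₂p ⊆ Set.Ioo x₁m x₁p ∧
      Set.SurjOn f₂ (Set.Icc x₂m x₂p) (Set.Icc (-c₂) c₂) ∧
      f₂ x₂m = -c₂ ∧ f₂ x₂p = c₂ := by
  have hm : f₂ x₁m < -c₂ := by
    have := hdiff x₁m (Set.left_mem_Icc.2 hx.le)
    rw [hf₁m] at this
    have := abs_lt.1 this
    linarith [this.2]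
  have hp : c₂ < f₂ x₁p := by
    have := hdiff x₁p (Set.right_mem_Icc.2 hx.le)
    rw [hf₁p] at this
    have := abs_lt.1 this
    linarith [(abs_lt.1 (hdiff x₁p (Set.right_mem_Icc.2 hx.le))).1]
  -- find x₂p with f₂ x₂p = c₂
  have hiv := intermediate_value_Icc hx.le hf₂cont
  obtain ⟨x₂p, hx₂p, hfx₂p⟩ := hiv ⟨by linarith, hp.le⟩
  -- find x₂m ∈ [x₁m, x₂p] with f₂ x₂m = -c₂
  have hsub : Set.Icc x₁m x₂p ⊆ Set.Icc x₁m x₁p :=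
    Set.Icc_subset_Icc le_rfl hx₂p.2
  have hiv2 := intermediate_value_Icc hx₂p.1 (hf₂cont.mono hsub)
  obtain ⟨x₂m, hx₂m, hfx₂m⟩ := hiv2 (by rw [hfx₂p]; exact ⟨hm.le, by linarith⟩)
  have h12 : x₂m < x₂p := lt_of_le_of_ne hx₂m.2 (by
    intro h; rw [h, hfx₂p] at hfx₂m; linarith)
  have hml : x₁m < x₂m := lt_of_le_of_ne hx₂m.1 (by
    intro h; rw [← h] at hfx₂m; linarith)
  have hpr : x₂p < x₁p := lt_of_le_of_ne hx₂p.2 (by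
    intro h; rw [h] at hfx₂p; linarith)
  refine ⟨x₂m, x₂p, h12, Set.Icc_subset_Ioo hml hpr, ?_, hfx₂m, hfx₂p⟩
  have hsub2 : Set.Icc x₂m x₂p ⊆ Set.Icc x₁m x₁p :=
    Set.Icc_subset_Icc hx₂m.1 hx₂p.2
  have := intermediate_value_Icc h12.le (hf₂cont.mono hsub2)
  rw [hfx₂m, hfx₂p] at this
  exact this
end
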